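/- For all natural numbers k, l, m with 1 ≤ m ≤ min(k, l), the following balanced quantum binomial identity holds in ℚ(q): Σ_{t=0}^{m} (−1)^t · ([l−m+t choose t]/[k+l−2m+t choose l−m+t]) · ([k+l−2m+1]/[k+l−2m+1+t]) · [l choose l−m+t] · [k+l−m+t choose k] = 0, where the t = m summand simplifies to (−1)^m·([l choose m]/[k+l−m choose l])·([k+l−2m+1]/[k+l−m+1])·[l choose l]·[k+l choose k]. -/

import Mathlib

open scoped BigOperators

noncomputable def q : RatFunc ℚ := RatFunc.X

noncomputable def qInt (k : ℕ) : RatFunc ℚ := (q ^ k - q⁻¹ ^ k) / (q - q⁻¹)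

noncomputable def qFact (n : ℕ) : RatFunc ℚ := ∏ i ∈ Finset.range n, qInt (i + 1)

noncomputable def qBinom (n k : ℕ) : RatFunc ℚ :=
  if k ≤ n then qFact n / (qFact (n - k) * qFact k) else 0

/-!
Write `l = m + a`, `k = m + b` and `m = r + 1`. Every summand is a `t`-independent constant times
`(-1)^t [r+1 choose t] ∏_{j<r} [a+b+2+j+t]`, and this product is `q^{-rt} P(q^{2t})` for a
polynomial `P` of degree at most `r`. So it suffices that `∑_t (-1)^t [r+1 choose t] w^t` vanishes
at `w = q^{2i-r}` for `i ≤ r`, which is read off the q-binomial theorem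
`∑_t (-1)^t [m choose t] w^t = ∏_{j<m} (1 - q^{2j+1-m} w)`.
-/

open Finset Polynomial

lemma q_ne_zero : q ≠ 0 := RatFunc.X_ne_zero

lemma q_pow_mul_inv_pow (n : ℕ) : q ^ n * q⁻¹ ^ n = 1 := by
  rw [← mul_pow, mul_inv_cancel₀ q_ne_zero, one_pow]

lemma q_pow_ne_one {n : ℕ} (hn : n ≠ 0) : q ^ n ≠ 1 := by
  intro h
  have hX : (X : ℚ[X]) ^ n = 1 := RatFunc.algebraMap_injective ℚ (by simpa [q] using h)
  simpa [hn] using congrArg natDegree hX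

@[simp]
lemma qInt_ne_zero {n : ℕ} (hn : n ≠ 0) : qInt n ≠ 0 := by
  have sub_ne_zero {n : ℕ} (hn : n ≠ 0) : q ^ n - q⁻¹ ^ n ≠ 0 := fun h ↦ by
    refine q_pow_ne_one (n := n + n) (by omega) ?_
    rw [pow_add, ← q_pow_mul_inv_pow n, sub_eq_zero.mp h]
  exact div_ne_zero (sub_ne_zero hn) (by simpa using sub_ne_zero one_ne_zero)

lemma qFact_zero : qFact 0 = 1 :=
  prod_range_zero _

lemma qFact_succ (n : ℕ) : qFact (n + 1) = qFact n * qInt (n + 1) :=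
  prod_range_succ _ _

lemma qFact_add (x r : ℕ) : qFact (x + r) = qFact x * ∏ j ∈ range r, qInt (x + j + 1) :=
  prod_range_add _ _ _

@[simp]
lemma qFact_ne_zero (n : ℕ) : qFact n ≠ 0 :=
  prod_ne_zero_iff.mpr fun _ _ ↦ qInt_ne_zero (by omega)

lemma qBinom_of_eq_add {n k d : ℕ} (h : n = k + d) :
    qBinom n k = qFact n / (qFact d * qFact k) := by
  subst h
  rw [qBinom, if_pos (by omega), Nat.add_sub_cancel_left]

lemma qBinom_zero_right (n : ℕ) : qBinom n 0 = 1 := by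
  rw [qBinom_of_eq_add (zero_add n).symm, qFact_zero, mul_one, div_self (qFact_ne_zero n)]

lemma qBinom_of_lt {n k : ℕ} (h : n < k) : qBinom n k = 0 := by
  rw [qBinom, if_neg (by omega)]

lemma qBinom_self (n : ℕ) : qBinom n n = 1 := by
  rw [qBinom_of_eq_add (add_zero n).symm, qFact_zero, one_mul, div_self (qFact_ne_zero n)]

lemma qInt_add (a b : ℕ) : qInt (a + b) = q ^ a * qInt b + q⁻¹ ^ b * qInt a := by
  simp only [qInt, pow_add]
  field_simp
  ring

lemma qBinom_succ_succ (n t : ℕ) :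
    qBinom (n + 1) (t + 1) = q ^ (t + 1) * qBinom n (t + 1) + q ^ t * q⁻¹ ^ n * qBinom n t := by
  rcases lt_trichotomy n t with h | rfl | h
  · simp [qBinom_of_lt, h, Nat.lt_succ_of_lt h]
  · simp [qBinom_self, qBinom_of_lt, q_ne_zero]
  obtain ⟨v, rfl⟩ : ∃ v, n = t + v + 1 := ⟨n - t - 1, by omega⟩
  have hsplit : qInt (t + v + 1 + 1) =
      q ^ (t + 1) * qInt (v + 1) + q ^ t * q⁻¹ ^ (t + v + 1) * qInt (t + 1) := by
    rw [show t + v + 1 + 1 = (t + 1) + (v + 1) by omega, qInt_add, add_assoc t, pow_add q⁻¹ t,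
      ← mul_assoc, q_pow_mul_inv_pow, one_mul]
  rw [qBinom_of_eq_add (d := v + 1) (by omega), qBinom_of_eq_add (d := v) (by omega),
    qBinom_of_eq_add (d := v + 1) (by omega), qFact_succ (t + v + 1), hsplit, qFact_succ v,
    qFact_succ t]
  field_simp

lemma sum_alternating_qBinom_succ (m : ℕ) (w : RatFunc ℚ) :
    ∑ t ∈ range (m + 2), (-1) ^ t * qBinom (m + 1) t * w ^ t =
      (1 - q⁻¹ ^ m * w) * ∑ t ∈ range (m + 1), (-1) ^ t * qBinom m t * (q * w) ^ t := by
  set f : ℕ → RatFunc ℚ := fun t ↦ (-1) ^ t * qBinom m t * (q * w) ^ t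
  have hshift : ∑ t ∈ range (m + 1), f (t + 1) + f 0 = ∑ t ∈ range (m + 1), f t := by
    rw [← sum_range_succ', sum_range_succ]
    simp [f, qBinom_of_lt]
  have hterm (t : ℕ) : (-1) ^ (t + 1) * qBinom (m + 1) (t + 1) * w ^ (t + 1) =
      f (t + 1) - q⁻¹ ^ m * w * f t := by
    simp only [f, qBinom_succ_succ, mul_pow]
    ring
  rw [sum_range_succ', sum_congr rfl fun t _ ↦ hterm t, sum_sub_distrib, ← mul_sum, ← hshift]
  simp [f, qBinom_zero_right]
  ring

lemma sum_alternating_qBinom_mul_pow (m : ℕ) (w : RatFunc ℚ) :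
    ∑ t ∈ range (m + 1), (-1) ^ t * qBinom m t * w ^ t =
      ∏ j ∈ range m, (1 - q ^ (2 * (j : ℤ) + 1 - m) * w) := by
  induction m generalizing w with
  | zero => simp [qBinom_zero_right]
  | succ m ih =>
    rw [sum_alternating_qBinom_succ, ih, prod_range_succ', mul_comm]
    congr 1
    · refine prod_congr rfl fun j _ ↦ ?_
      rw [← mul_assoc, ← zpow_add_one₀ q_ne_zero]
      congr 3
      push_cast
      ring
    · rw [show 2 * ((0 : ℕ) : ℤ) + 1 - ((m + 1 : ℕ) : ℤ) = -m by push_cast; ring, zpow_neg,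
        zpow_natCast, inv_pow]

lemma sum_alternating_qBinom_mul_pow_eq_zero {r i : ℕ} (hi : i ≤ r) :
    ∑ t ∈ range (r + 2), (-1) ^ t * qBinom (r + 1) t * (q⁻¹ ^ r * q ^ (2 * i)) ^ t = 0 := by
  have hexp :
      2 * ((r - i : ℕ) : ℤ) + 1 - ((r + 1 : ℕ) : ℤ) + (-(r : ℤ) + ((2 * i : ℕ) : ℤ)) = 0 := by
    push_cast [Nat.cast_sub hi]
    ring
  rw [sum_alternating_qBinom_mul_pow, prod_eq_zero (mem_range.mpr (show r - i < r + 1 by omega))]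
  rw [inv_pow, ← zpow_natCast, ← zpow_natCast, ← zpow_neg, ← zpow_add₀ q_ne_zero,
    ← zpow_add₀ q_ne_zero, hexp, zpow_zero, sub_self]

lemma sum_alternating_qBinom_mul_eval_eq_zero {r : ℕ} {P : (RatFunc ℚ)[X]}
    (hP : P.natDegree ≤ r) :
    ∑ t ∈ range (r + 2), (-1) ^ t * qBinom (r + 1) t * ((q⁻¹ ^ r) ^ t * P.eval ((q ^ 2) ^ t)) =
      0 := by
  simp_rw [eval_eq_sum_range' (Nat.lt_succ_of_le hP), mul_sum]
  rw [sum_comm]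
  refine sum_eq_zero fun i hi ↦ ?_
  calc ∑ t ∈ range (r + 2),
        (-1) ^ t * qBinom (r + 1) t * ((q⁻¹ ^ r) ^ t * (P.coeff i * ((q ^ 2) ^ t) ^ i))
      = P.coeff i *
          ∑ t ∈ range (r + 2), (-1) ^ t * qBinom (r + 1) t * (q⁻¹ ^ r * q ^ (2 * i)) ^ t := by
        rw [mul_sum]
        refine sum_congr rfl fun t _ ↦ ?_
        ring
    _ = 0 := by rw [sum_alternating_qBinom_mul_pow_eq_zero (mem_range_succ_iff.mp hi), mul_zero]

lemma qInt_add_eq_inv_pow_mul (n t : ℕ) :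
    qInt (n + t) = q⁻¹ ^ t * ((q ^ n * (q ^ 2) ^ t - q⁻¹ ^ n) / (q - q⁻¹)) := by
  rw [qInt, pow_add, pow_add, pow_right_comm, inv_pow q t]
  field_simp

lemma exists_prod_qInt_eq_mul_eval (r : ℕ) (n : ℕ → ℕ) :
    ∃ P : (RatFunc ℚ)[X], P.natDegree ≤ r ∧
      ∀ t, ∏ j ∈ range r, qInt (n j + t) = (q⁻¹ ^ r) ^ t * P.eval ((q ^ 2) ^ t) := by
  refine ⟨∏ j ∈ range r, (C (q ^ n j / (q - q⁻¹)) * X + C (-(q⁻¹ ^ n j / (q - q⁻¹)))), ?_,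
    fun t ↦ ?_⟩
  · refine (natDegree_prod_le _ _).trans ((sum_le_sum fun j _ ↦ natDegree_linear_le).trans ?_)
    simp
  · simp only [qInt_add_eq_inv_pow_mul, prod_mul_distrib, prod_const, card_range, eval_prod,
      eval_add, eval_mul, eval_C, eval_X, ← pow_mul, mul_comm t r]
    congr 1
    refine prod_congr rfl fun j _ ↦ ?_
    ring

lemma sum_alternating_qBinom_mul_prod_qInt_eq_zero (r : ℕ) (n : ℕ → ℕ) :
    ∑ t ∈ range (r + 2), (-1) ^ t * qBinom (r + 1) t * ∏ j ∈ range r, qInt (n j + t) = 0 := by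
  obtain ⟨P, hP, hprod⟩ := exists_prod_qInt_eq_mul_eval r n
  simp_rw [hprod]
  exact sum_alternating_qBinom_mul_eval_eq_zero hP

lemma summand_eq_mul_alternating (a b r : ℕ) {t : ℕ} (ht : t ≤ r + 1) :
    (-1) ^ t * (qBinom (a + t) t / qBinom (a + b + t) (a + t)) *
        (qInt (a + b + 1) / qInt (a + b + 1 + t)) *
        qBinom (r + 1 + a) (a + t) * qBinom (r + 1 + a + b + t) (r + 1 + b) =
      qFact b * qFact (r + 1 + a) * qInt (a + b + 1) /
          (qFact a * qFact (r + 1 + b) * qFact (r + 1)) *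
        ((-1) ^ t * qBinom (r + 1) t * ∏ j ∈ range r, qInt (a + b + 2 + j + t)) := by
  have hprod : qFact (a + b + 1 + t) * ∏ j ∈ range r, qInt (a + b + 2 + j + t) =
      qFact (r + 1 + a + b + t) := by
    rw [show r + 1 + a + b + t = a + b + 1 + t + r by omega, qFact_add (a + b + 1 + t) r]
    exact congrArg _ (prod_congr rfl fun j _ ↦ congrArg qInt (by omega))
  obtain ⟨u, hu⟩ : ∃ u, r + 1 = t + u := ⟨r + 1 - t, by omega⟩
  rw [qBinom_of_eq_add (d := a) (add_comm a t), qBinom_of_eq_add (d := b) (by omega),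
    qBinom_of_eq_add (d := u) (by omega), qBinom_of_eq_add (d := a + t) (by omega),
    qBinom_of_eq_add (d := u) hu, ← hprod, add_assoc (a + b) 1 t, add_comm 1 t, ← add_assoc,
    qFact_succ (a + b + t)]
  field_simp

theorem idempotent_annihilates (k l m : ℕ) (hm : 1 ≤ m) (hmk : m ≤ k) (hml : m ≤ l) :
    ∑ t ∈ Finset.range (m + 1),
      (-1 : RatFunc ℚ) ^ t *
        (qBinom (l - m + t) t / qBinom (k + l - 2 * m + t) (l - m + t)) *
        (qInt (k + l - 2 * m + 1) / qInt (k + l - 2 * m + 1 + t)) *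
        qBinom l (l - m + t) * qBinom (k + l - m + t) k = 0 := by
  obtain ⟨a, rfl⟩ : ∃ a, l = m + a := ⟨l - m, by omega⟩
  obtain ⟨b, rfl⟩ : ∃ b, k = m + b := ⟨k - m, by omega⟩
  obtain ⟨r, rfl⟩ : ∃ r, m = r + 1 := ⟨m - 1, by omega⟩
  simp only [Nat.add_sub_cancel_left, show r + 1 + b + (r + 1 + a) - 2 * (r + 1) = a + b by omega,
    show r + 1 + b + (r + 1 + a) - (r + 1) = r + 1 + a + b by omega]
  rw [sum_congr rfl fun t ht ↦ summand_eq_mul_alternating a b r (mem_range_succ_iff.mp ht),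
    ← mul_sum, sum_alternating_qBinom_mul_prod_qInt_eq_zero, mul_zero]
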